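/- Let X be a Dedekind complete pre-Riesz space and let 𝒫 be a set of band projections on X. Then there exists a unique band projection P₀ on X whose range equals ⋂_{P ∈ 𝒫} PX; and if 𝒫 is nonempty, then for each x ∈ X₊ the element P₀x is the infimum of the set {Px : P ∈ 𝒫} in X. In particular, the intersection of arbitrarily many projection bands in a Dedekind complete pre-Riesz space is again a projection band. -/

import Mathlib

open Pointwise

variable {X : Type*} [AddCommGroup X] [PartialOrder X] [IsOrderedAddMonoid X] [Module ℝ X]
    [PosSMulStrictMono ℝ X] [PosSMulReflectLT ℝ X]

/-- Two elements of an ordered vector space are disjoint if the sets `{x+y, -x-y}` and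
`{x-y, y-x}` have the same set of upper bounds. -/
def UDisjoint (x y : X) : Prop :=
  upperBounds ({x + y, -x - y} : Set X) = upperBounds ({x - y, y - x} : Set X)

/-- The disjoint complement `S^⊥` of a set `S`. -/
def dComp (S : Set X) : Set X := {x : X | ∀ s ∈ S, UDisjoint x s}

/-- A band: a set equal to its double disjoint complement. -/
def IsBand (B : Set X) : Prop := B = dComp (dComp B)

/-- A projection band: a band `B` with `B ∩ B^⊥ = {0}` and `B + B^⊥ = X`. -/
def IsProjBand (B : Set X) : Prop :=
  IsBand B ∧ B ∩ dComp B = {0} ∧ ∀ x : X, ∃ b ∈ B, ∃ c ∈ dComp B, x = b + c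

/-- A positive linear operator. -/
def IsPosMap (T : X →ₗ[ℝ] X) : Prop := ∀ x : X, 0 ≤ x → 0 ≤ T x

/-- A band projection: a linear projection whose range is a projection band and whose
kernel is the disjoint complement of the range. -/
def IsBandProj (P : X →ₗ[ℝ] X) : Prop :=
  P ∘ₗ P = P ∧ IsProjBand (Set.range ⇑P) ∧ (LinearMap.ker P : Set X) = dComp (Set.range ⇑P)

/-- A pre-Riesz space: for every nonempty finite `A ⊆ X` and every `x`, if the upper bounds
of `x + A` are contained in the upper bounds of `A`, then `x ≥ 0`. -/
def IsPreRiesz (X : Type*) [AddCommGroup X] [PartialOrder X] [IsOrderedAddMonoid X] [Module ℝ X]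
    [PosSMulStrictMono ℝ X] [PosSMulReflectLT ℝ X] : Prop :=
  ∀ (A : Set X) (x : X), A.Finite → A.Nonempty →
    upperBounds ((x + ·) '' A) ⊆ upperBounds A → 0 ≤ x

/-!
For `x ≥ 0` let `P₀ x` be the infimum of `T x` over the monoid generated by `ℙ`. Band projections
are positive contractions, so this orbit is directed downwards and the infimum exists by Dedekind
completeness; it is additive and positively homogeneous on `X₊`, and extends to a linear map since
the positive cone of a pre-Riesz space is generating. Every `P ∈ ℙ` fixes `P₀ x` and `P₀` fixes
`⋂ P X`, so `P₀` projects onto that intersection. An induction over the monoid shows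
`x - P₀ x ⊥ ⋂ P X`, and the pre-Riesz property turns such a projection into a band projection.
Band projections with the same range coincide, and on `X₊` the infimum over the monoid equals the
infimum over `ℙ` itself.
-/

section RealModule

variable {E : Type*} [AddCommGroup E] [Module ℝ E]

lemma eq_zero_of_add_self_eq_zero {x : E} (h : x + x = 0) : x = 0 := by
  rw [← two_smul ℝ, smul_eq_zero] at h
  exact h.resolve_left two_ne_zero

lemma nonneg_of_add_self_nonneg [PartialOrder E] [PosSMulMono ℝ E] {x : E} (h : 0 ≤ x + x) :
    0 ≤ x := by
  rwa [← two_smul ℝ, smul_nonneg_iff_nonneg_of_pos_left two_pos] at h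

end RealModule

section AbsUpperBounds

variable {E : Type*} [InvolutiveNeg E] [Preorder E]

/-- The upper bounds of `|a|` in a Riesz completion, so that `UDisjoint x y` reads
`|x + y| = |x - y|`. -/
def absUpperBounds (a : E) : Set E := upperBounds {a, -a}

lemma mem_absUpperBounds {a c : E} : c ∈ absUpperBounds a ↔ a ≤ c ∧ -a ≤ c := by
  simp [absUpperBounds, upperBounds_insert]

@[simp] lemma absUpperBounds_neg (a : E) : absUpperBounds (-a) = absUpperBounds a := by
  simp [absUpperBounds, Set.pair_comm]

end AbsUpperBounds

section Disjointness

variable {E : Type*} [AddCommGroup E] [PartialOrder E]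

lemma udisjoint_iff {x y : E} :
    UDisjoint x y ↔ absUpperBounds (x + y) = absUpperBounds (x - y) := by
  rw [UDisjoint, absUpperBounds, absUpperBounds, neg_add', neg_sub]

lemma UDisjoint.symm {x y : E} (h : UDisjoint x y) : UDisjoint y x := by
  rw [udisjoint_iff] at h ⊢
  rwa [add_comm, ← neg_sub, absUpperBounds_neg]

lemma udisjoint_zero_left (y : E) : UDisjoint 0 y := by
  rw [udisjoint_iff, zero_add, zero_sub, absUpperBounds_neg]

lemma eq_zero_of_udisjoint_self [IsOrderedAddMonoid E] [Module ℝ E] {x : E}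
    (h : UDisjoint x x) : x = 0 := by
  rw [udisjoint_iff, sub_self] at h
  have h0 : (0 : E) ∈ absUpperBounds (x + x) := h ▸ mem_absUpperBounds.2 (by simp)
  rw [mem_absUpperBounds, neg_nonpos] at h0
  exact eq_zero_of_add_self_eq_zero (le_antisymm h0.1 h0.2)

lemma udisjoint_of_forall_absUpperBounds_subset {x y : E}
    (h : ∀ s ∈ ({x, -x} : Set E), ∀ t ∈ ({y, -y} : Set E),
      absUpperBounds (s + t) ⊆ Set.Ici (s - t)) :
    UDisjoint x y := by
  have hx : x ∈ ({x, -x} : Set E) := by simp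
  have hx' : -x ∈ ({x, -x} : Set E) := by simp
  have hy : y ∈ ({y, -y} : Set E) := by simp
  have hy' : -y ∈ ({y, -y} : Set E) := by simp
  rw [udisjoint_iff]
  refine subset_antisymm (fun c hc => mem_absUpperBounds.2 ⟨h x hx y hy hc, ?_⟩)
    (fun c hc => mem_absUpperBounds.2 ⟨?_, ?_⟩)
  · have := h (-x) hx' (-y) hy' (by rwa [← neg_add, absUpperBounds_neg])
    rwa [Set.mem_Ici, neg_sub_neg, ← neg_sub] at this
  · have := h x hx (-y) hy' (by rwa [← sub_eq_add_neg])
    rwa [Set.mem_Ici, sub_neg_eq_add] at this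
  · have := h (-x) hx' y hy (by rwa [neg_add_eq_sub, ← neg_sub, absUpperBounds_neg])
    rwa [Set.mem_Ici, ← neg_add'] at this

end Disjointness

namespace IsPreRiesz

lemma exists_nonneg_sub (hX : IsPreRiesz X) (x : X) :
    ∃ u v : X, 0 ≤ u ∧ 0 ≤ v ∧ x = u - v := by
  obtain ⟨c, hxc, hc⟩ : ∃ c, x ≤ c ∧ 0 ≤ c := by
    by_contra! h
    refine h x le_rfl (hX {-x, 0} x (Set.toFinite _) (Set.insert_nonempty _ _) fun c hc => ?_)
    simp only [Set.image_pair, add_neg_cancel, add_zero, upperBounds_insert,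
      upperBounds_singleton, Set.mem_inter_iff, Set.mem_Ici] at hc
    exact absurd hc.1 (h c hc.2)
  exact ⟨c, c - x, hc, sub_nonneg.2 hxc, by abel⟩

lemma nonneg_of_absUpperBounds_subset (hX : IsPreRiesz X) {z r : X}
    (h : absUpperBounds z ⊆ upperBounds {z - r, -z - r}) : 0 ≤ r :=
  hX {z - r, -z - r} r (Set.toFinite _) (Set.insert_nonempty _ _) <| by
    rwa [Set.image_pair, add_sub_cancel, add_sub_cancel]

/-- In a Riesz completion `|z + r| ∨ |z - r| = |z| + |r|`, so `|z| ≥ |z ± r|` forces `r = 0`. -/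
lemma eq_zero_of_absUpperBounds_subset (hX : IsPreRiesz X) {z r : X}
    (h₁ : absUpperBounds z ⊆ absUpperBounds (z + r))
    (h₂ : absUpperBounds z ⊆ absUpperBounds (z - r)) : r = 0 := by
  have bounds : ∀ c ∈ absUpperBounds z, z + r ≤ c ∧ -(z + r) ≤ c ∧ z - r ≤ c ∧ -(z - r) ≤ c :=
    fun c hc => ⟨(mem_absUpperBounds.1 (h₁ hc)).1, (mem_absUpperBounds.1 (h₁ hc)).2,
      (mem_absUpperBounds.1 (h₂ hc)).1, (mem_absUpperBounds.1 (h₂ hc)).2⟩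
  refine le_antisymm ?_ (hX.nonneg_of_absUpperBounds_subset (z := z) fun c hc => ?_)
  · refine neg_nonneg.1 (hX.nonneg_of_absUpperBounds_subset (z := z) fun c hc => ?_)
    obtain ⟨h1, -, -, h4⟩ := bounds c hc
    rw [upperBounds_insert, upperBounds_singleton, sub_neg_eq_add, sub_neg_eq_add,
      neg_add_eq_sub, ← neg_sub]
    exact ⟨h1, h4⟩
  · obtain ⟨-, h2, h3, -⟩ := bounds c hc
    rw [upperBounds_insert, upperBounds_singleton, ← neg_add']
    exact ⟨h3, h2⟩

lemma eq_zero_of_udisjoint (hX : IsPreRiesz X) {x y : X} (h₁ : UDisjoint x y)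
    (h₂ : UDisjoint (x + y) (y + y)) : y = 0 := by
  rw [udisjoint_iff] at h₁ h₂
  have hsub : x + y - (y + y) = x - y := by abel
  rw [hsub, ← h₁] at h₂
  refine eq_zero_of_add_self_eq_zero (hX.eq_zero_of_absUpperBounds_subset h₂.superset ?_)
  rw [hsub, h₁]

end IsPreRiesz

def posContractions (R E : Type*) [Semiring R] [AddCommMonoid E] [Preorder E] [Module R E] :
    Submonoid (Module.End R E) where
  carrier := {T | ∀ x, 0 ≤ x → 0 ≤ T x ∧ T x ≤ x}
  mul_mem' hS hT x hx := ⟨(hS _ (hT x hx).1).1, (hS _ (hT x hx).1).2.trans (hT x hx).2⟩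
  one_mem' _ hx := ⟨hx, le_rfl⟩

lemma apply_eq_self_of_mem_closure {R E : Type*} [Semiring R] [AddCommMonoid E] [Module R E]
    {ℙ : Set (Module.End R E)} {T : Module.End R E} (hT : T ∈ Submonoid.closure ℙ) {b : E}
    (hb : ∀ P ∈ ℙ, P b = b) : T b = b := by
  induction hT using Submonoid.closure_induction with
  | mem P hP => exact hb P hP
  | one => rfl
  | mul _ _ _ _ hS hT => rw [Module.End.mul_apply, hT, hS]

lemma exists_isGLB_of_directedOn {E : Type*} [AddCommGroup E] [PartialOrder E]
    [IsOrderedAddMonoid E]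
    (hdc : ∀ A : Set E, A.Nonempty → DirectedOn (· ≤ ·) A → BddAbove A → ∃ s, IsLUB A s)
    {A : Set E} (hne : A.Nonempty) (hdir : DirectedOn (· ≥ ·) A) (hbdd : BddBelow A) :
    ∃ s, IsGLB A s := by
  have hdir' : DirectedOn (· ≤ ·) (-A) := fun a ha b hb => by
    obtain ⟨c, hc, hac, hbc⟩ := hdir (-a) ha (-b) hb
    exact ⟨-c, by simpa using hc, le_neg_of_le_neg hac, le_neg_of_le_neg hbc⟩
  obtain ⟨s, hs⟩ := hdc (-A) hne.neg hdir' hbdd.neg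
  exact ⟨-s, by simpa using hs.neg⟩

lemma exists_linearMap_eqOn_nonneg {E F : Type*} [AddCommGroup E] [PartialOrder E]
    [IsOrderedAddMonoid E] [Module ℝ E] [PosSMulMono ℝ E] [AddCommGroup F] [Module ℝ F]
    (hgen : ∀ x : E, ∃ u v : E, 0 ≤ u ∧ 0 ≤ v ∧ x = u - v) (f : E → F)
    (hadd : ∀ x y, 0 ≤ x → 0 ≤ y → f (x + y) = f x + f y)
    (hsmul : ∀ c : ℝ, 0 ≤ c → ∀ x, 0 ≤ x → f (c • x) = c • f x) :
    ∃ L : E →ₗ[ℝ] F, ∀ x, 0 ≤ x → L x = f x := by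
  choose u v hu hv huv using hgen
  have hwd : ∀ x u' v', 0 ≤ u' → 0 ≤ v' → x = u' - v' → f (u x) - f (v x) = f u' - f v' := by
    intro x u' v' hu' hv' hx
    rw [sub_eq_sub_iff_add_eq_add, ← hadd _ _ (hu x) hv', ← hadd _ _ hu' (hv x),
      ← sub_eq_sub_iff_add_eq_add.1 ((huv x).symm.trans hx)]
  have hmap_add : ∀ x y, f (u (x + y)) - f (v (x + y)) =
      (f (u x) - f (v x)) + (f (u y) - f (v y)) := fun x y => by
    rw [hwd (x + y) (u x + u y) (v x + v y) (add_nonneg (hu x) (hu y))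
      (add_nonneg (hv x) (hv y)) (by rw [add_sub_add_comm, ← huv x, ← huv y]),
      hadd _ _ (hu x) (hu y), hadd _ _ (hv x) (hv y)]
    abel
  have hmap_smul : ∀ (c : ℝ) x, f (u (c • x)) - f (v (c • x)) = c • (f (u x) - f (v x)) := by
    intro c x
    rcases le_total 0 c with hc | hc
    · rw [hwd (c • x) (c • u x) (c • v x) (smul_nonneg hc (hu x)) (smul_nonneg hc (hv x))
        (by rw [← smul_sub, ← huv x]), hsmul c hc _ (hu x), hsmul c hc _ (hv x), smul_sub]
    · have hc' : 0 ≤ -c := neg_nonneg.2 hc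
      rw [hwd (c • x) ((-c) • v x) ((-c) • u x) (smul_nonneg hc' (hv x))
        (smul_nonneg hc' (hu x)) (by rw [← smul_sub, neg_smul, ← smul_neg, neg_sub, ← huv x]),
        hsmul _ hc' _ (hv x), hsmul _ hc' _ (hu x), ← smul_sub, neg_smul, ← smul_neg, neg_sub]
  have hf0 : f 0 = 0 := by simpa using hadd 0 0 le_rfl le_rfl
  refine ⟨{ toFun := fun x => f (u x) - f (v x), map_add' := hmap_add, map_smul' := hmap_smul },
    fun x hx => ?_⟩
  show f (u x) - f (v x) = f x
  rw [hwd x x 0 hx le_rfl (sub_zero x).symm, hf0, sub_zero]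

section LowerEnvelope

variable {E : Type*} [AddCommGroup E] [PartialOrder E] [Module ℝ E]
  {M : Submonoid (Module.End ℝ E)}

lemma monotone_of_mem_posContractions [IsOrderedAddMonoid E] {T : Module.End ℝ E}
    (hT : T ∈ posContractions ℝ E) : Monotone T := fun x y h => by
  simpa using (hT _ (sub_nonneg.2 h)).1

lemma exists_isGLB_orbit [IsOrderedAddMonoid E]
    (hdc : ∀ A : Set E, A.Nonempty → DirectedOn (· ≤ ·) A → BddAbove A → ∃ s, IsLUB A s)
    (hM : M ≤ posContractions ℝ E) {x : E} (hx : 0 ≤ x) :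
    ∃ s, IsGLB (MulAction.orbit M x) s := by
  refine exists_isGLB_of_directedOn hdc ⟨x, MulAction.mem_orbit_self x⟩ ?_ ⟨0, ?_⟩
  · rintro _ ⟨S, rfl⟩ _ ⟨T, rfl⟩
    have hTx := hM T.2 x hx
    exact ⟨(S * T) • x, MulAction.mem_orbit x _,
      monotone_of_mem_posContractions (hM S.2) hTx.2, (hM S.2 _ hTx.1).2⟩
  · rintro _ ⟨T, rfl⟩
    exact (hM T.2 x hx).1

lemma isGLB_orbit_add [IsOrderedAddMonoid E] (hM : M ≤ posContractions ℝ E) {x y a b : E}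
    (hx : 0 ≤ x) (hy : 0 ≤ y) (ha : IsGLB (MulAction.orbit M x) a)
    (hb : IsGLB (MulAction.orbit M y) b) : IsGLB (MulAction.orbit M (x + y)) (a + b) := by
  refine ⟨?_, fun ℓ hℓ => ?_⟩
  · rintro _ ⟨T, rfl⟩
    exact (add_le_add (ha.1 ⟨T, rfl⟩) (hb.1 ⟨T, rfl⟩)).trans_eq (smul_add T x y).symm
  -- `(S * T) (x + y) ≤ S x + T y` for all `S T ∈ M`
  have hST : ∀ S T : M, ℓ - T • y ≤ S • x := fun S T => by
    have h₁ : ℓ ≤ (S * T) • (x + y) := hℓ ⟨S * T, rfl⟩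
    have h₂ : S • T • x ≤ S • x :=
      monotone_of_mem_posContractions (hM S.2) (hM T.2 x hx).2
    have h₃ : S • T • y ≤ T • y := (hM S.2 _ (hM T.2 y hy).1).2
    rw [mul_smul, smul_add, smul_add] at h₁
    exact sub_le_iff_le_add.2 (h₁.trans (add_le_add h₂ h₃))
  have hT : ∀ T : M, ℓ - a ≤ T • y := fun T =>
    sub_le_comm.1 (ha.2 (by rintro _ ⟨S, rfl⟩; exact hST S T))
  exact sub_le_iff_le_add'.1 (hb.2 (by rintro _ ⟨T, rfl⟩; exact hT T))

lemma isGLB_orbit_smul [PosSMulMono ℝ E] {c : ℝ} (hc : 0 ≤ c) {x a : E}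
    (ha : IsGLB (MulAction.orbit M x) a) : IsGLB (MulAction.orbit M (c • x)) (c • a) := by
  rcases hc.eq_or_lt with rfl | hc
  · have : MulAction.orbit M ((0 : ℝ) • x) = {0} := by
      simp [MulAction.orbit, zero_smul]
    rw [this, zero_smul]
    exact isGLB_singleton
  · have : MulAction.orbit M (c • x) = OrderIso.smulRight hc '' MulAction.orbit M x := by
      rw [MulAction.orbit, MulAction.orbit, ← Set.range_comp]
      congr 1
      ext T
      exact smul_comm T c x
    rw [this]
    exact (OrderIso.smulRight hc).isGLB_image'.2 ha

def IsLowerEnvelope (M : Submonoid (Module.End ℝ E)) (L : E →ₗ[ℝ] E) : Prop :=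
  (∀ x, 0 ≤ x → IsGLB (MulAction.orbit M x) (L x)) ∧
    ∀ x, L x ∈ upperBounds (lowerBounds (MulAction.orbit M x))

lemma exists_isLowerEnvelope [IsOrderedAddMonoid E] [PosSMulMono ℝ E]
    (hgen : ∀ x : E, ∃ u v : E, 0 ≤ u ∧ 0 ≤ v ∧ x = u - v)
    (hdc : ∀ A : Set E, A.Nonempty → DirectedOn (· ≤ ·) A → BddAbove A → ∃ s, IsLUB A s)
    (hM : M ≤ posContractions ℝ E) : ∃ L : E →ₗ[ℝ] E, IsLowerEnvelope M L := by
  choose! m hm using fun x (hx : 0 ≤ x) => exists_isGLB_orbit hdc hM hx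
  obtain ⟨L, hL⟩ := exists_linearMap_eqOn_nonneg hgen m
    (fun x y hx hy =>
      (hm _ (add_nonneg hx hy)).unique (isGLB_orbit_add hM hx hy (hm x hx) (hm y hy)))
    (fun c hc x hx => (hm _ (smul_nonneg hc hx)).unique (isGLB_orbit_smul hc (hm x hx)))
  have hglb : ∀ x, 0 ≤ x → IsGLB (MulAction.orbit M x) (L x) := fun x hx => hL x hx ▸ hm x hx
  refine ⟨L, hglb, fun x ℓ hℓ => ?_⟩
  obtain ⟨u, v, hu, hv, rfl⟩ := hgen x
  have : ℓ + L v ≤ L u := (hglb u hu).2 <| by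
    rintro _ ⟨T, rfl⟩
    have h₁ : ℓ ≤ T • (u - v) := hℓ ⟨T, rfl⟩
    have h₂ : L v ≤ T • v := (hglb v hv).1 ⟨T, rfl⟩
    calc ℓ + L v ≤ T • (u - v) + T • v := add_le_add h₁ h₂
      _ = T • u := by rw [smul_sub, sub_add_cancel]
  rw [map_sub]
  exact le_sub_iff_add_le.2 this

end LowerEnvelope

namespace IsBandProj

variable {E : Type*} [AddCommGroup E] [PartialOrder E] [Module ℝ E] {P : E →ₗ[ℝ] E}

lemma apply_apply (hP : IsBandProj P) (x : E) : P (P x) = P x :=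
  LinearMap.congr_fun hP.1 x

lemma mem_range_iff (hP : IsBandProj P) {y : E} : y ∈ Set.range P ↔ P y = y :=
  ⟨by rintro ⟨x, rfl⟩; exact hP.apply_apply x, fun h => ⟨y, h⟩⟩

lemma sub_apply_mem_dComp (hP : IsBandProj P) (x : E) : x - P x ∈ dComp (Set.range P) := by
  rw [← hP.2.2]
  simp [hP.apply_apply]

lemma eq_of_range_eq {Q : E →ₗ[ℝ] E} (hP : IsBandProj P) (hQ : IsBandProj Q)
    (h : Set.range P = Set.range Q) : P = Q := by
  ext x
  have hfix : Q (P x) = P x := hQ.mem_range_iff.1 (h ▸ ⟨x, rfl⟩)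
  have hker : x - P x ∈ (LinearMap.ker Q : Set E) := by
    rw [hQ.2.2, ← h]
    exact hP.sub_apply_mem_dComp x
  rw [SetLike.mem_coe, LinearMap.mem_ker, map_sub, hfix, sub_eq_zero] at hker
  exact hker.symm

variable [IsOrderedAddMonoid E] [PosSMulMono ℝ E]

/-- Disjointness of `x - P x` and `P x` reads `|x| = |x - 2 P x|`, which for `x ≥ 0` gives
`0 ≤ P x ≤ x`. -/
lemma mem_posContractions (hP : IsBandProj P) : P ∈ posContractions ℝ E := by
  intro x hx
  have hd := hP.sub_apply_mem_dComp x (P x) ⟨x, rfl⟩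
  rw [udisjoint_iff, sub_add_cancel, sub_sub] at hd
  have hc := hd ▸ mem_absUpperBounds.2 ⟨le_rfl, (neg_nonpos.2 hx).trans hx⟩
  rw [mem_absUpperBounds, sub_le_self_iff, neg_sub, sub_le_iff_le_add] at hc
  refine ⟨nonneg_of_add_self_nonneg hc.1, sub_nonneg.1 (nonneg_of_add_self_nonneg ?_)⟩
  rw [sub_add_sub_comm]
  exact sub_nonneg.2 hc.2

lemma monotone (hP : IsBandProj P) : Monotone P :=
  monotone_of_mem_posContractions hP.mem_posContractions

lemma sub_apply_le_sub_apply (hP : IsBandProj P) {x y : E} (h : x ≤ y) : x - P x ≤ y - P y := by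
  have := (hP.mem_posContractions (y - x) (sub_nonneg.2 h)).2
  rw [map_sub, sub_le_sub_iff] at this
  rw [sub_le_sub_iff, add_comm x]
  exact this

lemma le_apply_self_of_le_apply (hP : IsBandProj P) {ℓ x : E} (h : ℓ ≤ P x) : ℓ ≤ P ℓ := by
  have := hP.sub_apply_le_sub_apply h
  rwa [hP.apply_apply, sub_self, sub_nonpos] at this

end IsBandProj

lemma isBandProj_of_sub_apply_mem_dComp (hX : IsPreRiesz X) {P : X →ₗ[ℝ] X}
    (hPP : P ∘ₗ P = P) (h : ∀ x, x - P x ∈ dComp (Set.range P)) : IsBandProj P := by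
  have hdouble : ∀ z, (z - P z) + (z - P z) ∈ dComp (Set.range P) := fun z => by
    rw [← add_sub_add_comm, ← map_add]
    exact h (z + z)
  have hker : ∀ z ∈ dComp (Set.range P), P z = 0 := fun z hz =>
    hX.eq_zero_of_udisjoint (h z (P z) ⟨z, rfl⟩)
      (by rw [sub_add_cancel, ← map_add]; exact hz _ ⟨z + z, rfl⟩)
  have hband : IsBand (Set.range P) := by
    refine subset_antisymm (fun b hb s hs => (hs b hb).symm) fun z hz => ⟨z, ?_⟩
    have := hX.eq_zero_of_udisjoint (h z (P z) ⟨z, rfl⟩).symm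
      (by rw [add_sub_cancel]; exact hz _ (hdouble z))
    exact (sub_eq_zero.1 this).symm
  refine ⟨hPP, ⟨hband, ?_, fun x => ⟨P x, ⟨x, rfl⟩, x - P x, h x, by abel⟩⟩, ?_⟩
  · refine subset_antisymm (fun b ⟨hb, hb'⟩ => eq_zero_of_udisjoint_self (hb' b hb)) ?_
    rintro _ rfl
    exact ⟨⟨0, map_zero P⟩, fun s _ => udisjoint_zero_left s⟩
  · ext z
    refine ⟨fun hz => ?_, hker z⟩
    simpa [LinearMap.mem_ker.1 hz] using h z

section BandProjFamily

variable {E : Type*} [AddCommGroup E] [PartialOrder E] [Module ℝ E]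
  {ℙ : Set (E →ₗ[ℝ] E)} {P₀ : E →ₗ[ℝ] E}

lemma closure_le_posContractions [IsOrderedAddMonoid E] [PosSMulMono ℝ E]
    (hℙ : ∀ P ∈ ℙ, IsBandProj P) : Submonoid.closure ℙ ≤ posContractions ℝ E :=
  Submonoid.closure_le.2 fun P hP => (hℙ P hP).mem_posContractions

lemma mem_iInter_range_iff (hℙ : ∀ P ∈ ℙ, IsBandProj P) {b : E} :
    b ∈ ⋂ P ∈ ℙ, Set.range P ↔ ∀ P ∈ ℙ, P b = b := by
  simp only [Set.mem_iInter]
  exact forall₂_congr fun P hP => (hℙ P hP).mem_range_iff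

namespace IsLowerEnvelope

lemma le_apply (h : IsLowerEnvelope (Submonoid.closure ℙ) P₀) {P : E →ₗ[ℝ] E} (hP : P ∈ ℙ)
    {x : E} (hx : 0 ≤ x) : P₀ x ≤ P x :=
  (h.1 x hx).1 (MulAction.mem_orbit x (⟨P, Submonoid.subset_closure hP⟩ : Submonoid.closure ℙ))

lemma apply_eq_self [IsOrderedAddMonoid E] (h : IsLowerEnvelope (Submonoid.closure ℙ) P₀)
    {b : E} (hb : ∀ P ∈ ℙ, P b = b) : P₀ b = b := by
  have hle : ∀ b : E, (∀ P ∈ ℙ, P b = b) → b ≤ P₀ b := fun b hb => h.2 b <| by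
    rintro _ ⟨T, rfl⟩
    exact (apply_eq_self_of_mem_closure T.2 hb).ge
  refine le_antisymm ?_ (hle b hb)
  simpa using hle (-b) fun P hP => by rw [map_neg, hb P hP]

lemma isGLB_apply [IsOrderedAddMonoid E] [PosSMulMono ℝ E] (hℙ : ∀ P ∈ ℙ, IsBandProj P)
    (h : IsLowerEnvelope (Submonoid.closure ℙ) P₀) (hne : ℙ.Nonempty) {x : E} (hx : 0 ≤ x) :
    IsGLB {y | ∃ P ∈ ℙ, y = P x} (P₀ x) := by
  refine ⟨?_, fun ℓ hℓ => h.2 x ?_⟩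
  · rintro _ ⟨P, hP, rfl⟩
    exact h.le_apply hP hx
  rintro _ ⟨⟨T, hT⟩, rfl⟩
  show ℓ ≤ T x
  induction hT using Submonoid.closure_induction_left with
  | one =>
    obtain ⟨P, hP⟩ := hne
    exact (hℓ ⟨P, hP, rfl⟩).trans ((hℙ P hP).mem_posContractions x hx).2
  | mul_left P hP T _ ih =>
    exact ((hℙ P hP).le_apply_self_of_le_apply (hℓ ⟨P, hP, rfl⟩)).trans
      ((hℙ P hP).monotone ih)

end IsLowerEnvelope

end BandProjFamily

namespace IsLowerEnvelope

variable {ℙ : Set (X →ₗ[ℝ] X)} {P₀ : X →ₗ[ℝ] X}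

lemma apply_eq_of_mem (hX : IsPreRiesz X) (hℙ : ∀ P ∈ ℙ, IsBandProj P)
    (h : IsLowerEnvelope (Submonoid.closure ℙ) P₀) {P : X →ₗ[ℝ] X} (hP : P ∈ ℙ) (x : X) :
    P (P₀ x) = P₀ x := by
  suffices hpos : ∀ u, 0 ≤ u → P (P₀ u) = P₀ u by
    obtain ⟨u, v, hu, hv, rfl⟩ := hX.exists_nonneg_sub x
    rw [map_sub, map_sub, hpos u hu, hpos v hv]
  intro u hu
  have hnonneg : 0 ≤ P₀ u := (h.1 u hu).2 <| by
    rintro _ ⟨T, rfl⟩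
    exact (closure_le_posContractions hℙ T.2 u hu).1
  exact le_antisymm ((hℙ P hP).mem_posContractions _ hnonneg).2
    ((hℙ P hP).le_apply_self_of_le_apply (h.le_apply hP hu))

lemma range_eq (hX : IsPreRiesz X) (hℙ : ∀ P ∈ ℙ, IsBandProj P)
    (h : IsLowerEnvelope (Submonoid.closure ℙ) P₀) :
    Set.range P₀ = ⋂ P ∈ ℙ, Set.range P := by
  ext y
  rw [mem_iInter_range_iff hℙ]
  refine ⟨?_, fun hy => ⟨y, h.apply_eq_self hy⟩⟩
  rintro ⟨x, rfl⟩ P hP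
  exact h.apply_eq_of_mem hX hℙ hP x

/-- With `d = x - P₀ x - b - c`, every `T` in the monoid generated by `ℙ` satisfies
`d + P₀ (x + x) ≤ T (x + x)`: passing from `T` to `P T` applies `P` to this inequality and
`I - P` to `x - P₀ x + b ≤ c`. As `P₀ (x + x)` dominates all lower bounds of the orbit,
`d ≤ 0`. -/
lemma absUpperBounds_sub_apply_add_subset (hX : IsPreRiesz X) (hℙ : ∀ P ∈ ℙ, IsBandProj P)
    (h : IsLowerEnvelope (Submonoid.closure ℙ) P₀) (x : X) {b : X} (hb : ∀ P ∈ ℙ, P b = b) :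
    absUpperBounds (x - P₀ x + b) ⊆ Set.Ici (x - P₀ x - b) := by
  intro c hc
  rw [mem_absUpperBounds] at hc
  obtain ⟨hc₁, hc₂⟩ := hc
  set d := x - P₀ x - b - c with hd
  have hT : ∀ T ∈ Submonoid.closure ℙ, d + P₀ (x + x) ≤ T (x + x) := by
    intro T hT
    induction hT using Submonoid.closure_induction_left with
    | one =>
      rw [map_add, Module.End.one_apply]
      calc d + (P₀ x + P₀ x) = -(x - P₀ x + b) - c + (x + x) := by rw [hd]; abel
        _ ≤ x + x := add_le_of_nonpos_left (sub_nonpos.2 hc₂)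
    | mul_left P hP T _ ih =>
      have hfix := h.apply_eq_of_mem hX hℙ hP
      have h₁ : P d + P₀ (x + x) ≤ P (T (x + x)) := by
        simpa only [map_add, hfix] using (hℙ P hP).monotone ih
      have h₂ := (hℙ P hP).sub_apply_le_sub_apply hc₁
      calc d + P₀ (x + x)
          = (P d + P₀ (x + x)) + ((x - P₀ x + b) - P (x - P₀ x + b)) - (c - P c) := by
            simp only [hd, map_add, map_sub, hfix, hb P hP]
            abel
        _ ≤ P (T (x + x)) + (c - P c) - (c - P c) := sub_le_sub_right (add_le_add h₁ h₂) _
        _ = (P * T) (x + x) := by rw [add_sub_cancel_right, Module.End.mul_apply]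
  have hd0 : d + P₀ (x + x) ≤ P₀ (x + x) := h.2 (x + x) <| by
    rintro _ ⟨T, rfl⟩
    exact hT T T.2
  exact sub_nonpos.1 (add_le_iff_nonpos_left.1 hd0)

lemma sub_apply_mem_dComp (hX : IsPreRiesz X) (hℙ : ∀ P ∈ ℙ, IsBandProj P)
    (h : IsLowerEnvelope (Submonoid.closure ℙ) P₀) (x : X) :
    x - P₀ x ∈ dComp (Set.range P₀) := by
  intro b hb
  rw [h.range_eq hX hℙ, mem_iInter_range_iff hℙ] at hb
  refine udisjoint_of_forall_absUpperBounds_subset fun s hs t ht => ?_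
  obtain ⟨x', rfl⟩ : ∃ x', s = x' - P₀ x' := by
    rcases hs with rfl | rfl
    exacts [⟨x, rfl⟩, ⟨-x, by rw [map_neg, neg_sub, sub_neg_eq_add, neg_add_eq_sub]⟩]
  refine h.absUpperBounds_sub_apply_add_subset hX hℙ x' fun P hP => ?_
  rcases ht with rfl | rfl
  exacts [hb P hP, by rw [map_neg, hb P hP]]

lemma isBandProj (hX : IsPreRiesz X) (hℙ : ∀ P ∈ ℙ, IsBandProj P)
    (h : IsLowerEnvelope (Submonoid.closure ℙ) P₀) : IsBandProj P₀ :=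
  isBandProj_of_sub_apply_mem_dComp hX
    (LinearMap.ext fun x => h.apply_eq_self fun _ hP => h.apply_eq_of_mem hX hℙ hP x)
    (h.sub_apply_mem_dComp hX hℙ)

end IsLowerEnvelope

/-- In a Dedekind complete pre-Riesz space, for any set `ℙ` of band projections there is a
unique band projection `P₀` with range `⋂_{P ∈ ℙ} PX`; if `ℙ` is nonempty then `P₀ x` is
the infimum of `{P x : P ∈ ℙ}` for each `x ∈ X₊`. -/
theorem stmt_10 (hX : IsPreRiesz X)
    (hdc : ∀ A : Set X, A.Nonempty → DirectedOn (· ≤ ·) A → BddAbove A → ∃ s, IsLUB A s)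
    (ℙ : Set (X →ₗ[ℝ] X)) (hℙ : ∀ P ∈ ℙ, IsBandProj P) :
    ∃ P₀ : X →ₗ[ℝ] X,
      (IsBandProj P₀ ∧ Set.range ⇑P₀ = ⋂ P ∈ ℙ, Set.range ⇑P) ∧
      (∀ Q : X →ₗ[ℝ] X, (IsBandProj Q ∧ Set.range ⇑Q = ⋂ P ∈ ℙ, Set.range ⇑P) → Q = P₀) ∧
      (ℙ.Nonempty → ∀ x : X, 0 ≤ x → IsGLB {y : X | ∃ P ∈ ℙ, y = P x} (P₀ x)) := by
  obtain ⟨P₀, hP₀⟩ :=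
    exists_isLowerEnvelope hX.exists_nonneg_sub hdc (closure_le_posContractions hℙ)
  have hbp := hP₀.isBandProj hX hℙ
  have hrange := hP₀.range_eq hX hℙ
  exact ⟨P₀, ⟨hbp, hrange⟩, fun Q hQ => hQ.1.eq_of_range_eq hbp (hQ.2.trans hrange.symm),
    fun hne x hx => hP₀.isGLB_apply hℙ hne hx⟩
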